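/- arXiv:math/0411349 — 2 statements merged into one kernel-verified Lean document; each statement's English description precedes it below -/
import Mathlib

section
/- Let S be a Noetherian commutative ring and let A and B be commutative S-algebras. The following are equivalent: (1) for every n and all polynomials p_1, …, p_s, q_1, …, q_t in S[X_1, …, X_n], if there is a ∈ A^n with p_k(a) = 0 for all k and q_l(a) ≠ 0 for all l, then there is b ∈ B^n with p_k(b) = 0 for all k and q_l(b) ≠ 0 for all l; (2) for every finitely generated S-subalgebra V of A and every finite list of nonzero elements a_1, …, a_m of V there exists an S-algebra homomorphism φ : V → B with φ(a_j) ≠ 0 for all j; (3) there exist an infinite set ι, a nonprincipal ultrafilter U on ι, and an injective ring homomorphism η : A → (∏_{i∈ι} B)/I_U such that η(algebraMap S A s) equals the class of the constant sequence with value algebraMap S B s, for every s ∈ S. -/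
def ultraIdeal {ι : Type*} (R : ι → Type*) [∀ i, CommRing (R i)] (U : Ultrafilter ι) :
    Ideal (∀ i, R i) where
  carrier := {f | {i | f i = 0} ∈ U}
  zero_mem' := Filter.univ_mem' (fun i => rfl)
  add_mem' := by
    intro f g hf hg
    refine U.toFilter.mem_of_superset (Filter.inter_mem hf hg) ?_
    rintro i ⟨hfi, hgi⟩
    simp only [Set.mem_setOf_eq] at *
    rw [Pi.add_apply, hfi, hgi, add_zero]
  smul_mem' := by
    intro c f hf
    refine U.toFilter.mem_of_superset hf ?_
    intro i hfi
    simp only [Set.mem_setOf_eq] at *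
    rw [smul_eq_mul, Pi.mul_apply, hfi, mul_zero]

/-!
(3) ⇒ (1): push a solution in `A` along `η` into the ultrapower; by Łoś, it gives solutions in
`B` on a set in `U`.

(1) ⇒ (2): over a Noetherian ring a finitely generated algebra is finitely presented,
`V = S[X] / (p₁, …, pₛ)`. With preimages `qⱼ` of the `aⱼ`, the generators of `V` solve
`p = 0, q ≠ 0`; a solution `b` in `B` kills the `pₖ`, so `aeval b` descends to `V`.

(2) ⇒ (3): for each finite `E ⊆ A` pick `φ_E` on the subalgebra generated by `E`, nonzero on
`E \ {0}`, and glue these maps along an ultrafilter refining `atTop` on `Finset A × ℕ`: every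
element lies eventually in the domain of `φ_E`, and the factor `ℕ` makes the ultrafilter
nonprincipal.
-/

open MvPolynomial Filter

section Ultraproduct

variable {ι : Type*} {R : ι → Type*} [∀ i, CommRing (R i)] {U : Ultrafilter ι}

theorem mem_ultraIdeal {f : ∀ i, R i} : f ∈ ultraIdeal R U ↔ ∀ᶠ i in U, f i = 0 := Iff.rfl

theorem ultraIdeal_mk_eq_zero_iff {f : ∀ i, R i} :
    Ideal.Quotient.mk (ultraIdeal R U) f = 0 ↔ ∀ᶠ i in U, f i = 0 :=
  Ideal.Quotient.eq_zero_iff_mem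

theorem ultraIdeal_mk_eq_mk_iff {f g : ∀ i, R i} :
    Ideal.Quotient.mk (ultraIdeal R U) f = Ideal.Quotient.mk (ultraIdeal R U) g ↔
      ∀ᶠ i in U, f i = g i := by
  simp only [Ideal.Quotient.eq, mem_ultraIdeal, Pi.sub_apply, sub_eq_zero]

end Ultraproduct

section HasSolution

variable {S : Type*} [CommRing S] {σ κ τ : Type*}

def HasSolution (R : Type*) [CommRing R] [Algebra S R]
    (p : κ → MvPolynomial σ S) (q : τ → MvPolynomial σ S) : Prop :=
  ∃ a : σ → R, (∀ k, aeval a (p k) = 0) ∧ ∀ l, aeval a (q l) ≠ 0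

variable {p : κ → MvPolynomial σ S} {q : τ → MvPolynomial σ S}

theorem HasSolution.map_of_injective {A C : Type*} [CommRing A] [CommRing C] [Algebra S A]
    [Algebra S C] (h : HasSolution A p q) (f : A →ₐ[S] C) (hf : Function.Injective f) :
    HasSolution C p q := by
  obtain ⟨a, hp, hq⟩ := h
  refine ⟨fun j => f (a j), fun k => ?_, fun l => ?_⟩
  · rw [← comp_aeval_apply, hp k, map_zero]
  · rw [← comp_aeval_apply, ne_eq, map_eq_zero_iff f hf]
    exact hq l

variable {ι : Type*} {R : ι → Type*} [∀ i, CommRing (R i)] [∀ i, Algebra S (R i)]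
  {U : Ultrafilter ι}

theorem aeval_ultraIdeal_mk (g : σ → ∀ i, R i) (r : MvPolynomial σ S) :
    aeval (fun j => Ideal.Quotient.mk (ultraIdeal R U) (g j)) r =
      Ideal.Quotient.mk (ultraIdeal R U) (fun i => aeval (fun j => g j i) r) := by
  have hcoord (i : ι) : aeval g r i = aeval (fun j => g j i) r :=
    comp_aeval_apply g (Pi.evalAlgHom S R i) r
  rw [← Ideal.Quotient.mkₐ_eq_mk S, ← comp_aeval_apply, funext hcoord]

theorem HasSolution.eventually_of_ultraproduct [Finite κ] [Finite τ]
    (h : HasSolution ((∀ i, R i) ⧸ ultraIdeal R U) p q) : ∀ᶠ i in U, HasSolution (R i) p q := by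
  obtain ⟨a, hp, hq⟩ := h
  choose g hg using fun j => Ideal.Quotient.mk_surjective (a j)
  obtain rfl : (fun j => Ideal.Quotient.mk _ (g j)) = a := funext hg
  simp only [aeval_ultraIdeal_mk, ultraIdeal_mk_eq_zero_iff, ne_eq, ← Ultrafilter.eventually_not]
    at hp hq
  filter_upwards [eventually_all.2 hp, eventually_all.2 hq] with i hpi hqi
  exact ⟨fun j => g j i, hpi, hqi⟩

end HasSolution

section FinitePresentation

variable {S V B : Type*} [CommRing S] [CommRing V] [CommRing B] [Algebra S V] [Algebra S B]

theorem exists_algHom_forall_ne_zero_of_hasSolution [Algebra.FinitePresentation S V]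
    (h : ∀ (n s t : ℕ) (p : Fin s → MvPolynomial (Fin n) S) (q : Fin t → MvPolynomial (Fin n) S),
      HasSolution V p q → HasSolution B p q)
    {m : ℕ} (a : Fin m → V) (ha : ∀ j, a j ≠ 0) : ∃ φ : V →ₐ[S] B, ∀ j, φ (a j) ≠ 0 := by
  obtain ⟨n, f, hf, hker⟩ := Algebra.FinitePresentation.out (R := S) (A := V)
  obtain ⟨s, p, hp⟩ := Submodule.fg_iff_exists_fin_generating_family.1 hker
  choose q hq using fun j => hf (a j)
  have hfp (k : Fin s) : f (p k) = 0 := RingHom.mem_ker.1 (hp ▸ Submodule.subset_span ⟨k, rfl⟩)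
  obtain ⟨b, hbp, hbq⟩ : HasSolution B p q := by
    refine h n s m p q ⟨fun i => f (X i), fun k => ?_, fun j => ?_⟩ <;>
      rw [← Function.comp_def, ← aeval_unique]
    · exact hfp k
    · exact hq j ▸ ha j
  refine ⟨f.liftOfSurjective hf (aeval b) ?_, fun j => ?_⟩
  · rw [← hp, Submodule.span_le]
    rintro _ ⟨k, rfl⟩
    exact hbp k
  · rw [← hq j, AlgHom.liftOfSurjective_apply]
    exact hbq j

end FinitePresentation

section Glue

variable {S A : Type*} [CommRing S] [CommRing A] [Algebra S A]
  {ι : Type*} {R : ι → Type*} [∀ i, CommRing (R i)] [∀ i, Algebra S (R i)]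
  (U : Ultrafilter ι) (V : ι → Subalgebra S A) (φ : ∀ i, V i →ₐ[S] R i)

open Classical in
noncomputable def glueFun (a : A) : ∀ i, R i := fun i => if h : a ∈ V i then φ i ⟨a, h⟩ else 0

variable {V φ} in
theorem glueFun_of_mem {a : A} {i : ι} (h : a ∈ V i) : glueFun V φ a i = φ i ⟨a, h⟩ := dif_pos h

noncomputable def ultraGlue (hV : ∀ a, ∀ᶠ i in U, a ∈ V i) :
    A →ₐ[S] (∀ i, R i) ⧸ ultraIdeal R U where
  toFun a := Ideal.Quotient.mk _ (glueFun V φ a)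
  map_one' := by
    rw [← map_one (Ideal.Quotient.mk _)]
    congr 1
    funext i
    exact (glueFun_of_mem (one_mem _)).trans (map_one _)
  map_zero' := by
    rw [← map_zero (Ideal.Quotient.mk _)]
    congr 1
    funext i
    exact (glueFun_of_mem (zero_mem _)).trans (map_zero _)
  map_mul' a b := by
    rw [← map_mul, ultraIdeal_mk_eq_mk_iff]
    filter_upwards [hV a, hV b] with i ha hb
    rw [Pi.mul_apply, glueFun_of_mem (mul_mem ha hb), glueFun_of_mem ha, glueFun_of_mem hb,
      ← map_mul]
    rfl
  map_add' a b := by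
    rw [← map_add, ultraIdeal_mk_eq_mk_iff]
    filter_upwards [hV a, hV b] with i ha hb
    rw [Pi.add_apply, glueFun_of_mem (add_mem ha hb), glueFun_of_mem ha, glueFun_of_mem hb,
      ← map_add]
    rfl
  commutes' s := by
    refine congrArg (Ideal.Quotient.mk _) (funext fun i => ?_)
    exact (glueFun_of_mem (Subalgebra.algebraMap_mem _ s)).trans ((φ i).commutes s)

theorem ultraGlue_injective (hV : ∀ a, ∀ᶠ i in U, a ∈ V i)
    (hφ : ∀ a ≠ 0, ∀ᶠ i in U, ∀ h : a ∈ V i, φ i ⟨a, h⟩ ≠ 0) :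
    Function.Injective (ultraGlue U V φ hV) := by
  refine (injective_iff_map_eq_zero _).2 fun a ha => by_contra fun hne => ?_
  obtain ⟨i, hi0, hmem, hi⟩ := ((ultraIdeal_mk_eq_zero_iff.1 ha).and ((hV a).and (hφ a hne))).exists
  exact hi hmem ((glueFun_of_mem hmem).symm.trans hi0)

end Glue

theorem Ultrafilter.of_atTop_notMem_of_finite {α : Type*} [Preorder α] [Nonempty α]
    [IsDirectedOrder α] [NoTopOrder α] {s : Set α} (hs : s.Finite) :
    s ∉ Ultrafilter.of (atTop : Filter α) := fun hsU =>
  Ultrafilter.compl_notMem_iff.2 hsU (Ultrafilter.of_le _ (atTop_le_cofinite hs.compl_mem_cofinite))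

theorem eventually_mem_of_atTop_finset_prod {A : Type*} [DecidableEq A] (a : A) :
    ∀ᶠ x : Finset A × ℕ in Ultrafilter.of (atTop : Filter (Finset A × ℕ)), a ∈ x.1 :=
  Ultrafilter.of_le _ <| (eventually_ge_atTop ({a}, 0)).mono fun _ hx =>
    Finset.singleton_subset_iff.1 hx.1

theorem exists_algHom_adjoin_forall_ne_zero {S A B : Type*} [CommRing S] [CommRing A]
    [CommRing B] [Algebra S A] [Algebra S B] [DecidableEq A]
    (h : ∀ V : Subalgebra S A, V.FG → ∀ (m : ℕ) (a : Fin m → V), (∀ j, a j ≠ 0) →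
      ∃ φ : V →ₐ[S] B, ∀ j, φ (a j) ≠ 0)
    (E : Finset A) :
    ∃ φ : Algebra.adjoin S (E : Set A) →ₐ[S] B, ∀ a ∈ E, a ≠ 0 → ∀ h, φ ⟨a, h⟩ ≠ 0 := by
  let e := (E.erase 0).equivFin
  obtain ⟨φ, hφ⟩ := h _ (Subalgebra.fg_adjoin_finset E) _
    (fun j => ⟨e.symm j, Algebra.subset_adjoin (Finset.mem_of_mem_erase (e.symm j).2)⟩)
    (fun j hj => Finset.ne_of_mem_erase (e.symm j).2 (congrArg Subtype.val hj))
  refine ⟨φ, fun a ha ha0 _ => ?_⟩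
  simpa using hφ (e ⟨a, Finset.mem_erase.2 ⟨ha0, ha⟩⟩)

theorem stmt7 (S A B : Type) [CommRing S] [IsNoetherianRing S]
    [CommRing A] [CommRing B] [Algebra S A] [Algebra S B] :
    List.TFAE
      [ ∀ (n s t : ℕ) (p : Fin s → MvPolynomial (Fin n) S) (q : Fin t → MvPolynomial (Fin n) S),
          (∃ a : Fin n → A, (∀ k, MvPolynomial.aeval a (p k) = 0) ∧
            (∀ l, MvPolynomial.aeval a (q l) ≠ 0)) →
          (∃ b : Fin n → B, (∀ k, MvPolynomial.aeval b (p k) = 0) ∧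
            (∀ l, MvPolynomial.aeval b (q l) ≠ 0)),
        ∀ V : Subalgebra S A, V.FG → ∀ (m : ℕ) (a : Fin m → V), (∀ j, a j ≠ 0) →
          ∃ φ : V →ₐ[S] B, ∀ j, φ (a j) ≠ 0,
        ∃ (ι : Type) (U : Ultrafilter ι), Infinite ι ∧
          (∀ s : Set ι, s.Finite → s ∉ U) ∧
          ∃ η : A →+* ((∀ _ : ι, B) ⧸ ultraIdeal (fun _ : ι => B) U),
            Function.Injective η ∧
            ∀ s : S, η (algebraMap S A s) =
              Ideal.Quotient.mk (ultraIdeal (fun _ : ι => B) U)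
                (fun _ => algebraMap S B s) ] := by
  tfae_have 1 → 2 := fun h1 V hV m a ha => by
    have := Algebra.FinitePresentation.of_finiteType.1 (V.fg_iff_finiteType.1 hV)
    exact exists_algHom_forall_ne_zero_of_hasSolution
      (fun n s t p q hsol => h1 n s t p q (hsol.map_of_injective V.val Subtype.val_injective)) a ha
  tfae_have 2 → 3 := fun h2 => by
    classical
    choose φ hφ using exists_algHom_adjoin_forall_ne_zero h2
    let U := Ultrafilter.of (atTop : Filter (Finset A × ℕ))
    have hV (a : A) : ∀ᶠ x : Finset A × ℕ in U, a ∈ Algebra.adjoin S (x.1 : Set A) :=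
      (eventually_mem_of_atTop_finset_prod a).mono fun _ hx => Algebra.subset_adjoin hx
    let η := ultraGlue U _ (fun x => φ x.1) hV
    refine ⟨Finset A × ℕ, U, inferInstance, fun s hs => Ultrafilter.of_atTop_notMem_of_finite hs,
      η, ultraGlue_injective U _ _ hV fun a ha => ?_, η.commutes⟩
    exact (eventually_mem_of_atTop_finset_prod a).mono fun x hx => hφ x.1 a hx ha
  tfae_have 3 → 1 := by
    rintro ⟨ι, U, -, -, η, hη, hcomm⟩ n s t p q hA
    obtain ⟨-, hB⟩ := (HasSolution.map_of_injective hA { η with commutes' := hcomm }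
      hη).eventually_of_ultraproduct.exists
    exact hB
  tfae_finish
end

section
/- Let ι be a countably infinite set, U a nonprincipal ultrafilter on ι, (K_i)_{i∈ι} a family of fields, and n ∈ ℕ. Let P := ∏_i K_i and Q' := ∏_i K_i[X_1, …, X_n] (product of multivariate polynomial rings), and let I_U ⊆ P and J'_U ⊆ Q' be the ideals of families f with {i : f i = 0} ∈ U; write [·] for residue classes. Then there exists a surjective ring homomorphism π' : Q'/J'_U → (P/I_U)[[X_1, …, X_n]] onto the formal power series ring such that π'([(C(a_i))_i]) = C([a]) for every a = (a_i)_i ∈ P, π'([(X_j)_i]) = X_j for each j, and the kernel of π' equals ⋂_{d∈ℕ} 𝔛^d, where 𝔛 is the ideal of Q'/J'_U generated by the classes of the constant families X_1, …, X_n. -/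
namespace MvPowerSeries

variable {σ : Type*}

theorem map_surjective {R S : Type*} [Semiring R] [Semiring S] (f : R →+* S)
    (hf : Function.Surjective f) : Function.Surjective (map (σ := σ) f) := fun g =>
  ⟨fun μ => Function.surjInv hf (coeff μ g), by
    ext μ; exact Function.surjInv_eq hf (coeff μ g)⟩

noncomputable def piEquiv {ι : Type*} (R : ι → Type*) [∀ i, Semiring (R i)] :
    MvPowerSeries σ (∀ i, R i) ≃+* ∀ i, MvPowerSeries σ (R i) where
  __ := RingHom.pi fun i => map (Pi.evalRingHom R i)
  invFun f μ i := coeff μ (f i)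
  left_inv _ := rfl
  right_inv _ := rfl

@[simp]
theorem coeff_piEquiv_symm_apply {ι : Type*} {R : ι → Type*} [∀ i, Semiring (R i)]
    (f : ∀ i, MvPowerSeries σ (R i)) (μ : σ →₀ ℕ) (i : ι) :
    coeff μ ((piEquiv R).symm f) i = coeff μ (f i) := rfl

theorem le_order_of_mem_span_X_pow {R : Type*} [CommSemiring R] {d : ℕ} {f : MvPowerSeries σ R}
    (hf : f ∈ Ideal.span (Set.range X) ^ d) : (d : ℕ∞) ≤ f.order := by
  induction d generalizing f with
  | zero => simp
  | succ d ih =>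
    rw [pow_succ] at hf
    refine Submodule.mul_induction_on hf (fun x hx y hy => ?_) (fun x y hx hy => ?_)
    · have hy : 1 ≤ y.order := by
        rw [one_le_order_iff_constCoeff_eq_zero]
        refine (Ideal.span_le (I := RingHom.ker constantCoeff)).mpr ?_ hy
        rintro _ ⟨j, rfl⟩
        exact constantCoeff_X j
      calc ((d + 1 : ℕ) : ℕ∞) = d + 1 := by push_cast; rfl
        _ ≤ x.order + y.order := add_le_add (ih hx) hy
        _ ≤ (x * y).order := le_order_mul
    · exact (le_min hx hy).trans min_order_le_add

theorem eq_zero_of_forall_mem_span_X_pow {R : Type*} [CommSemiring R] {f : MvPowerSeries σ R}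
    (hf : ∀ d, f ∈ Ideal.span (Set.range X) ^ d) : f = 0 := by
  rw [← order_eq_top_iff, ENat.eq_top_iff_forall_ge]
  exact fun d => le_order_of_mem_span_X_pow (hf d)

end MvPowerSeries

theorem Ideal.mem_span_range_pow_of_forall_apply_mem {ι κ : Type*} [Finite κ] {R : ι → Type*}
    [∀ i, CommSemiring (R i)] (x : κ → ∀ i, R i) (d : ℕ) {y : ∀ i, R i}
    (hy : ∀ i, y i ∈ Ideal.span (Set.range fun k => x k i) ^ d) :
    y ∈ Ideal.span (Set.range x) ^ d := by
  have := Fintype.ofFinite κ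
  induction d generalizing y with
  | zero => simp
  | succ d ih =>
    have hcoeff : ∀ i, ∃ c : κ → R i, (∀ k, c k ∈ Ideal.span (Set.range fun k => x k i) ^ d) ∧
        ∑ k, c k * x k i = y i := by
      intro i
      have hyi := hy i
      rw [pow_succ, ← Ideal.smul_eq_mul, Submodule.mem_ideal_smul_span_iff_exists_sum] at hyi
      obtain ⟨c, hc, hsum⟩ := hyi
      exact ⟨c, hc, by rw [← hsum, Finsupp.sum_fintype _ _ (by simp)]; rfl⟩
    choose c hc hsum using hcoeff
    have hy_eq : y = ∑ k, (fun i => c i k) * x k := by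
      funext i
      simp [Finset.sum_apply, hsum]
    rw [hy_eq, pow_succ]
    exact Ideal.sum_mem _ fun k _ =>
      Ideal.mul_mem_mul (ih fun i => hc i k) (Ideal.subset_span ⟨k, rfl⟩)

theorem Ultrafilter.exists_tendsto_atTop_nat {ι : Type*} [Countable ι] (U : Ultrafilter ι)
    (hU : ∀ s : Set ι, s.Finite → s ∉ U) : ∃ e : ι → ℕ, Filter.Tendsto e U Filter.atTop := by
  obtain ⟨e, he⟩ := Countable.exists_injective_nat ι
  have hU_le : (U : Filter ι) ≤ Filter.cofinite := fun s hs =>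
    U.compl_notMem_iff.mp (hU _ (Filter.mem_cofinite.mp hs))
  exact ⟨e, Nat.cofinite_eq_atTop ▸ he.tendsto_cofinite.mono_left hU_le⟩

namespace ultraIdeal

variable {ι : Type*} {R : ι → Type*} [∀ i, CommRing (R i)] {U : Ultrafilter ι}

theorem mem_iff {f : ∀ i, R i} : f ∈ ultraIdeal R U ↔ ∀ᶠ i in U, f i = 0 :=
  Iff.rfl

theorem mk_eq_zero_iff {f : ∀ i, R i} :
    Ideal.Quotient.mk (ultraIdeal R U) f = 0 ↔ ∀ᶠ i in U, f i = 0 :=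
  Ideal.Quotient.eq_zero_iff_mem

theorem mk_eq_mk_of_eventuallyEq {f g : ∀ i, R i} (h : ∀ᶠ i in U, f i = g i) :
    Ideal.Quotient.mk (ultraIdeal R U) f = Ideal.Quotient.mk (ultraIdeal R U) g := by
  rw [← sub_eq_zero, ← map_sub, mk_eq_zero_iff]
  exact h.mono fun i hi => sub_eq_zero.mpr hi

theorem mk_mem_span_range_pow_of_eventually_mem {κ : Type*} [Finite κ] (x : κ → ∀ i, R i)
    (d : ℕ) {f : ∀ i, R i} (hf : ∀ᶠ i in U, f i ∈ Ideal.span (Set.range fun k => x k i) ^ d) :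
    Ideal.Quotient.mk (ultraIdeal R U) f ∈
      Ideal.span (Set.range fun k => Ideal.Quotient.mk (ultraIdeal R U) (x k)) ^ d := by
  classical
  let g : ∀ i, R i := fun i => if f i ∈ Ideal.span (Set.range fun k => x k i) ^ d then f i else 0
  have hg : g ∈ Ideal.span (Set.range x) ^ d :=
    Ideal.mem_span_range_pow_of_forall_apply_mem x d fun i => by
      unfold g
      split_ifs with h
      exacts [h, zero_mem _]
  rw [mk_eq_mk_of_eventuallyEq (hf.mono fun i hi => (if_pos hi).symm : ∀ᶠ i in U, f i = g i)]
  have := Ideal.mem_map_of_mem (Ideal.Quotient.mk (ultraIdeal R U)) hg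
  rwa [Ideal.map_pow, Ideal.map_span, ← Set.range_comp] at this

end ultraIdeal

section UltraCoeff

open MvPowerSeries

variable {ι : Type*} (U : Ultrafilter ι) (R : ι → Type*) [∀ i, CommRing (R i)] (σ : Type*)

noncomputable def ultraCoeffHom :
    (∀ i, MvPolynomial σ (R i)) ⧸ ultraIdeal (fun i => MvPolynomial σ (R i)) U →+*
      MvPowerSeries σ ((∀ i, R i) ⧸ ultraIdeal R U) :=
  Ideal.Quotient.lift _
    ((map (Ideal.Quotient.mk _)).comp ((piEquiv R).symm.toRingHom.comp
      (RingHom.pi fun i => MvPolynomial.coeToMvPowerSeries.ringHom.comp (Pi.evalRingHom _ i))))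
    fun f hf => by
      ext μ
      exact ultraIdeal.mk_eq_zero_iff.mpr ((ultraIdeal.mem_iff.mp hf).mono fun i hi => by simp [hi])

variable {U R σ}

theorem coeff_ultraCoeffHom_mk (f : ∀ i, MvPolynomial σ (R i)) (μ : σ →₀ ℕ) :
    coeff μ (ultraCoeffHom U R σ (Ideal.Quotient.mk _ f)) =
      Ideal.Quotient.mk _ fun i => MvPolynomial.coeff μ (f i) := by
  rw [ultraCoeffHom, Ideal.Quotient.lift_mk, RingHom.comp_apply, coeff_map]
  rfl

theorem ultraCoeffHom_mk_C (a : ∀ i, R i) :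
    ultraCoeffHom U R σ (Ideal.Quotient.mk _ fun i => MvPolynomial.C (a i)) =
      C (Ideal.Quotient.mk _ a) := by
  classical
  ext μ
  rw [coeff_ultraCoeffHom_mk, coeff_C]
  split_ifs with h
  · simp only [h, MvPolynomial.coeff_zero_C]
  · simp only [MvPolynomial.coeff_C_of_ne_zero h]
    exact map_zero _

theorem ultraCoeffHom_mk_X (j : σ) :
    ultraCoeffHom U R σ (Ideal.Quotient.mk _ fun _ => MvPolynomial.X j) = X j := by
  classical
  ext μ
  rw [coeff_ultraCoeffHom_mk, coeff_X]
  split_ifs with h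
  · simp only [h, MvPolynomial.coeff_X_same]
    exact map_one _
  · simp only [MvPolynomial.coeff_X, if_neg (Ne.symm h)]
    exact map_zero _

theorem ultraCoeffHom_surjective [Finite σ] [Countable ι] (hU : ∀ s : Set ι, s.Finite → s ∉ U) :
    Function.Surjective (ultraCoeffHom U R σ) := by
  obtain ⟨e, he⟩ := U.exists_tendsto_atTop_nat hU
  intro g
  obtain ⟨G, rfl⟩ := map_surjective _ Ideal.Quotient.mk_surjective g
  refine ⟨Ideal.Quotient.mk _ fun i => truncTotal (e i) (piEquiv R G i), ?_⟩
  ext μ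
  rw [coeff_ultraCoeffHom_mk, coeff_map]
  apply ultraIdeal.mk_eq_mk_of_eventuallyEq
  filter_upwards [he.eventually_gt_atTop μ.degree] with i hi
  exact coeff_truncTotal _ hi

theorem ker_ultraCoeffHom [Finite σ] :
    RingHom.ker (ultraCoeffHom U R σ) = ⨅ d : ℕ,
      Ideal.span (Set.range fun j : σ => Ideal.Quotient.mk _ fun _ => MvPolynomial.X j) ^ d := by
  ext x
  obtain ⟨f, rfl⟩ := Ideal.Quotient.mk_surjective x
  rw [RingHom.mem_ker, Submodule.mem_iInf]
  constructor
  · intro hf d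
    have hcoeff (μ : σ →₀ ℕ) : ∀ᶠ i in U, MvPolynomial.coeff μ (f i) = 0 := by
      rw [← ultraIdeal.mk_eq_zero_iff, ← coeff_ultraCoeffHom_mk, hf, map_zero]
    apply ultraIdeal.mk_mem_span_range_pow_of_eventually_mem
    filter_upwards [(Filter.eventually_all_finite (Finsupp.finite_of_degree_lt d)).mpr
      fun μ _ => hcoeff μ] with i hi
    exact (MvPolynomial.mem_pow_idealOfVars_iff' d (f i)).mpr hi
  · intro hf
    refine eq_zero_of_forall_mem_span_X_pow fun d => ?_
    have := Ideal.mem_map_of_mem (ultraCoeffHom U R σ) (hf d)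
    rw [Ideal.map_pow, Ideal.map_span, ← Set.range_comp, Function.comp_def] at this
    simpa only [ultraCoeffHom_mk_X] using this

end UltraCoeff

theorem stmt9_general {ι : Type} [Countable ι] (U : Ultrafilter ι)
    (hU : ∀ s : Set ι, s.Finite → s ∉ U)
    (K : ι → Type) [∀ i, Field (K i)] (n : ℕ) :
    letI P := ∀ i, K i
    letI Q' := ∀ i, MvPolynomial (Fin n) (K i)
    letI IU := ultraIdeal K U
    letI JU' := ultraIdeal (fun i => MvPolynomial (Fin n) (K i)) U
    letI 𝔛 : Ideal (Q' ⧸ JU') := Ideal.span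
      (Set.range fun j : Fin n =>
        Ideal.Quotient.mk JU' (fun i => (MvPolynomial.X j : MvPolynomial (Fin n) (K i))))
    ∃ π' : (Q' ⧸ JU') →+* MvPowerSeries (Fin n) (P ⧸ IU),
      Function.Surjective π' ∧
      (∀ a : P, π' (Ideal.Quotient.mk JU' (fun i => MvPolynomial.C (a i))) =
        (MvPowerSeries.C : (P ⧸ IU) →+* MvPowerSeries (Fin n) (P ⧸ IU)) (Ideal.Quotient.mk IU a)) ∧
      (∀ j : Fin n, π' (Ideal.Quotient.mk JU'
          (fun i => (MvPolynomial.X j : MvPolynomial (Fin n) (K i)))) =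
        MvPowerSeries.X j) ∧
      RingHom.ker π' = ⨅ d : ℕ, 𝔛 ^ d :=
  ⟨ultraCoeffHom U K (Fin n), ultraCoeffHom_surjective hU, ultraCoeffHom_mk_C,
    ultraCoeffHom_mk_X, ker_ultraCoeffHom⟩

set_option synthInstance.maxHeartbeats 1000000 in
set_option maxHeartbeats 2000000 in
theorem stmt9 {ι : Type} [Countable ι] [Infinite ι] (U : Ultrafilter ι)
    (hU : ∀ s : Set ι, s.Finite → s ∉ U)
    (K : ι → Type) [∀ i, Field (K i)] (n : ℕ) :
    letI P := ∀ i, K i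
    letI Q' := ∀ i, MvPolynomial (Fin n) (K i)
    letI IU := ultraIdeal K U
    letI JU' := ultraIdeal (fun i => MvPolynomial (Fin n) (K i)) U
    letI 𝔛 : Ideal (Q' ⧸ JU') := Ideal.span
      (Set.range fun j : Fin n =>
        Ideal.Quotient.mk JU' (fun i => (MvPolynomial.X j : MvPolynomial (Fin n) (K i))))
    ∃ π' : (Q' ⧸ JU') →+* MvPowerSeries (Fin n) (P ⧸ IU),
      Function.Surjective π' ∧
      (∀ a : P, π' (Ideal.Quotient.mk JU' (fun i => MvPolynomial.C (a i))) =
        (MvPowerSeries.C : (P ⧸ IU) →+* MvPowerSeries (Fin n) (P ⧸ IU)) (Ideal.Quotient.mk IU a)) ∧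
      (∀ j : Fin n, π' (Ideal.Quotient.mk JU'
          (fun i => (MvPolynomial.X j : MvPolynomial (Fin n) (K i)))) =
        MvPowerSeries.X j) ∧
      RingHom.ker π' = ⨅ d : ℕ, 𝔛 ^ d :=
  stmt9_general U hU K n
end
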